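/- arXiv:1309.3942 — 2 statements merged into one kernel-verified Lean document; each statement's English description precedes it below -/
import Mathlib

section
/- Let a, b, c be distinct positive integers with gcd(a,b,c) = 1. Then the equation 1 + e^{2πiaξ} + e^{2πibξ} + e^{2πicξ} = 0 has a real solution ξ if and only if exactly two of a, b, c are odd and one is even. -/
open MeasureTheory Finset Polynomial
open scoped Classical

noncomputable section

/-- The self-similar set `K(b, D)`, i.e. the attractor of the IFS
`{x ↦ (x+d)/b : d ∈ D}`, described by radix expansions. -/
def Kset (b : ℕ) (D : Finset ℤ) : Set ℝ :=
  {x : ℝ | ∃ f : ℕ → ℤ, (∀ n, f n ∈ D) ∧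
    HasSum (fun n : ℕ => (f n : ℝ) / (b : ℝ) ^ (n + 1)) x}

/-- `J` is a tiling set for `K`: translates of `K` by `J` cover `ℝ` up to a null
set and overlap in null sets. -/
def IsTilingSet (J K : Set ℝ) : Prop :=
  J.Countable ∧
  volume ((⋃ t ∈ J, (fun x : ℝ => x + t) '' K)ᶜ) = 0 ∧
  ∀ t₁ ∈ J, ∀ t₂ ∈ J, t₁ ≠ t₂ →
    volume (((fun x : ℝ => x + t₁) '' K) ∩ ((fun x : ℝ => x + t₂) '' K)) = 0

def IsTile (K : Set ℝ) : Prop := ∃ J : Set ℝ, IsTilingSet J K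

/-- The exponential `e_λ(x) = exp(2πiλx)`. -/
def expChar (lam x : ℝ) : ℂ :=
  Complex.exp (2 * (Real.pi : ℂ) * Complex.I * (lam : ℂ) * (x : ℂ))

/-- The exponentials indexed by `Λ` are pairwise orthogonal in `L²(μ)`. -/
def IsOrthogonalSetFor (Λ : Set ℝ) (μ : Measure ℝ) : Prop :=
  ∀ l₁ ∈ Λ, ∀ l₂ ∈ Λ, l₁ ≠ l₂ →
    ∫ x : ℝ, expChar l₁ x * (starRingEnd ℂ) (expChar l₂ x) ∂μ = 0

/-- `Λ` is a spectrum of the measure `μ`: `0 ∈ Λ`, the exponentials `e_λ, λ ∈ Λ`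
are pairwise orthogonal in `L²(μ)`, and their span is dense in `L²(μ)`
(equivalently, only the zero element of `L²(μ)` is orthogonal to all of them). -/
def IsSpectrumOfMeasure (Λ : Set ℝ) (μ : Measure ℝ) : Prop :=
  Λ.Countable ∧ (0 : ℝ) ∈ Λ ∧ IsOrthogonalSetFor Λ μ ∧
  ∀ f : ℝ → ℂ, MemLp f 2 μ →
    (∀ lam ∈ Λ, ∫ x : ℝ, f x * (starRingEnd ℂ) (expChar lam x) ∂μ = 0) →
    f =ᵐ[μ] 0

/-- A set of positive finite Lebesgue measure is spectral if `L²(K)` admits an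
orthogonal family of exponentials spanning a dense subspace. -/
def IsSpectralSet (K : Set ℝ) : Prop :=
  ∃ Λ : Set ℝ, IsSpectrumOfMeasure Λ (volume.restrict K)

/-- `Γ` is a spectrum of the finite set `A ⊂ ℤ` (w.r.t. the normalized counting
measure on `A`): `#Γ = #A` and the exponentials are pairwise orthogonal. -/
def IsSpectrumOfIntFinset (Γ : Finset ℝ) (A : Finset ℤ) : Prop :=
  Γ.card = A.card ∧
  ∀ l₁ ∈ Γ, ∀ l₂ ∈ Γ, l₁ ≠ l₂ →
    ∑ a ∈ A, Complex.exp (2 * (Real.pi : ℂ) * Complex.I * ((l₁ - l₂ : ℝ) : ℂ) * (a : ℂ)) = 0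

def IsSpectralIntFinset (A : Finset ℤ) : Prop :=
  ∃ Γ : Finset ℝ, IsSpectrumOfIntFinset Γ A

/-- `μ` is the self-similar measure of the pair `(b, D)`. -/
def IsSelfSimilarMeasure (b : ℕ) (D : Finset ℤ) (μ : Measure ℝ) : Prop :=
  IsProbabilityMeasure μ ∧
  μ = (D.card : ENNReal)⁻¹ • ∑ d ∈ D, Measure.map (fun x : ℝ => (x + (d : ℝ)) / (b : ℝ)) μ

/-- `A` is an integer tile: `A ⊕ B ≡ ℤ_n (mod n)` for some `n` and finite `B`. -/
def IsIntegerTile (A : Finset ℤ) : Prop :=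
  ∃ n : ℕ, 0 < n ∧ ∃ B : Finset ℤ,
    ∀ r : ZMod n, ∃! p : ℤ × ℤ, p.1 ∈ A ∧ p.2 ∈ B ∧ ((p.1 + p.2 : ℤ) : ZMod n) = r

/-- The sumset `E 0 + E 1 + ⋯ + E k`. -/
def famSum (k : ℕ) (E : ℕ → Finset ℤ) : Finset ℤ :=
  (Fintype.piFinset fun i : Fin (k + 1) => E i.val).image fun f => ∑ i, f i

/-- The sum `E 0 ⊕ E 1 ⊕ ⋯ ⊕ E k` is direct: all sums are distinct. -/
def FamilyUniqueSums (k : ℕ) (E : ℕ → Finset ℤ) : Prop :=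
  ∀ f g : Fin (k + 1) → ℤ, (∀ i, f i ∈ E i.val) → (∀ i, g i ∈ E i.val) →
    ∑ i, f i = ∑ i, g i → f = g

/-- `F` is a complete residue system modulo `b`. -/
def IsCompleteResidueSystem (b : ℕ) (F : Finset ℤ) : Prop :=
  ∀ r : ZMod b, ∃! x, x ∈ F ∧ (x : ZMod b) = r

/-- The product-form digit set `D = E₀ + b^{ℓ₁}E₁ + ⋯ + b^{ℓ_k}E_k` (with `ℓ 0 = 0`). -/
def Dprod (b k : ℕ) (E : ℕ → Finset ℤ) (ℓ : ℕ → ℕ) : Finset ℤ :=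
  (Fintype.piFinset fun i : Fin (k + 1) => E i.val).image
    fun f => ∑ i, (b : ℤ) ^ (ℓ i.val) * f i

/-- The sum defining the product form is direct. -/
def ProdFormDirect (b k : ℕ) (E : ℕ → Finset ℤ) (ℓ : ℕ → ℕ) : Prop :=
  ∀ f g : Fin (k + 1) → ℤ, (∀ i, f i ∈ E i.val) → (∀ i, g i ∈ E i.val) →
    ∑ i, (b : ℤ) ^ (ℓ i.val) * f i = ∑ i, (b : ℤ) ^ (ℓ i.val) * g i → f = g

/-- The set `A = ⊕_{i} ⊕_{j=0}^{ℓ_i - 1} b^j E_i` (the `i = 0` term is void when `ℓ 0 = 0`). -/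
def Aset (b k : ℕ) (E : ℕ → Finset ℤ) (ℓ : ℕ → ℕ) : Finset ℤ :=
  (Fintype.piFinset fun q : Σ i : Fin (k + 1), Fin (ℓ i.val) => E q.1.val).image
    fun f => ∑ q : Σ i : Fin (k + 1), Fin (ℓ i.val), (b : ℤ) ^ (q.2 : ℕ) * f q

/-- Mask polynomial `P_F(x) = ∑_{d ∈ F} x^d` of a finite set of nonnegative integers. -/
def maskPoly (F : Finset ℤ) : Polynomial ℤ := ∑ d ∈ F, Polynomial.X ^ d.toNat

/-- `Ψ(x) = ∏_{d ∈ S} Φ_d(x)` where `S = {d > 1 : d ∣ b, Φ_d ∣ P_F}`. -/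
def PsiPoly (b : ℕ) (F : Finset ℤ) : Polynomial ℤ :=
  ∏ d ∈ b.divisors.filter (fun d => 1 < d ∧ cyclotomic d ℤ ∣ maskPoly F), cyclotomic d ℤ

/-- `K_D^{(i)}(x) = Ψ₀(x)Ψ₁(x^{b^{ℓ₁}}) ⋯ Ψ_i(x^{b^{ℓ_i}})`. -/
def Kpoly (b : ℕ) (E : ℕ → Finset ℤ) (ℓ : ℕ → ℕ) (i : ℕ) : Polynomial ℤ :=
  ∏ j ∈ Finset.range (i + 1), Polynomial.expand ℤ (b ^ (ℓ j)) (PsiPoly b (E j))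

/-- `nIdx Q = lcm {s ≥ 1 : Φ_s ∣ Q}` (any `s` with `Φ_s ∣ Q` satisfies
`φ(s) ≤ deg Q`, hence `s ≤ 2 (deg Q + 1)²`, so the range is exhaustive). -/
def nIdx (Q : Polynomial ℤ) : ℕ :=
  ((Finset.Icc 1 (2 * (Q.natDegree + 1) ^ 2)).filter fun s => cyclotomic s ℤ ∣ Q).lcm id

/-- `F' ≡ F (mod n)`: each element of `F` is changed by some integer multiple of `n`
(keeping the elements distinct). -/
def ModSet (n : ℕ) (F F' : Finset ℤ) : Prop :=
  ∃ g : ℤ → ℤ, F' = F.image g ∧ (∀ x ∈ F, (n : ℤ) ∣ g x - x) ∧ F'.card = F.card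

/-- The sumset `Dprev + b^{ℓi} Ei`. -/
def stepSum (b : ℕ) (ℓi : ℕ) (Dprev Ei : Finset ℤ) : Finset ℤ :=
  (Dprev ×ˢ Ei).image fun p => p.1 + (b : ℤ) ^ ℓi * p.2

/-- The sum `Dprev ⊕ b^{ℓi} Ei` is direct. -/
def StepDirect (b : ℕ) (ℓi : ℕ) (Dprev Ei : Finset ℤ) : Prop :=
  ∀ d₁ ∈ Dprev, ∀ e₁ ∈ Ei, ∀ d₂ ∈ Dprev, ∀ e₂ ∈ Ei,
    d₁ + (b : ℤ) ^ ℓi * e₁ = d₂ + (b : ℤ) ^ ℓi * e₂ → d₁ = d₂ ∧ e₁ = e₂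

/-- `Dseq` is the sequence `D^{(0)}, …, D^{(k)}` of the modulo product-form
construction for `E₀ ⊕ ⋯ ⊕ E_k = ℤ_b` and `0 = ℓ₀ ≤ ℓ₁ ≤ ⋯ ≤ ℓ_k`:
`D^{(0)} ≡ E₀ (mod n₀)` and `D^{(i)} ≡ D^{(i-1)} ⊕ b^{ℓ_i}E_i (mod n_i)`. -/
def IsModuloProductForm (b k : ℕ) (E : ℕ → Finset ℤ) (ℓ : ℕ → ℕ)
    (Dseq : ℕ → Finset ℤ) : Prop :=
  famSum k E = (Finset.range b).image (fun j => (j : ℤ)) ∧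
  FamilyUniqueSums k E ∧
  ℓ 0 = 0 ∧ (∀ i j, i ≤ j → j ≤ k → ℓ i ≤ ℓ j) ∧
  ModSet (nIdx (Kpoly b E ℓ 0)) (E 0) (Dseq 0) ∧
  ∀ i, 1 ≤ i → i ≤ k →
    StepDirect b (ℓ i) (Dseq (i - 1)) (E i) ∧
    ModSet (nIdx (Kpoly b E ℓ i)) (stepSum b (ℓ i) (Dseq (i - 1)) (E i)) (Dseq i)

/-- The double sum `⊕_{i=0}^{k-1} ⊕_{j=t_i}^{t_{i+1}-1} b^j F(k-i-1)`. -/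
def doubleSum (b k : ℕ) (t : ℕ → ℕ) (F : ℕ → Finset ℤ) : Finset ℤ :=
  (Fintype.piFinset
      (fun q : Σ i : Fin k, {j : ℕ // j ∈ Finset.Ico (t i.val) (t (i.val + 1))} =>
        F (k - q.1.val - 1))).image
    fun f => ∑ q : Σ i : Fin k, {j : ℕ // j ∈ Finset.Ico (t i.val) (t (i.val + 1))},
      (b : ℤ) ^ (q.2.val) * f q

/-- `𝒞_i = p̃_{i-1}·{0, 1, …, p_i − 1}` where `p̃_{i-1} = p₀⋯p_{i-1}`. -/
def Cset (p : ℕ → ℕ) (i : ℕ) : Finset ℤ :=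
  (Finset.range (p i)).image fun j => (∏ l ∈ Finset.range i, (p l : ℤ)) * j

/-- The set of zeros of `ξ ↦ 1 + e^{2πiaξ} + e^{2πibξ} + e^{2πicξ}`. -/
def maskZeroSet (a b c : ℤ) : Set ℝ :=
  {ξ : ℝ | (1 : ℂ) + Complex.exp (2 * (Real.pi : ℂ) * Complex.I * (a : ℂ) * (ξ : ℂ))
      + Complex.exp (2 * (Real.pi : ℂ) * Complex.I * (b : ℂ) * (ξ : ℂ))
      + Complex.exp (2 * (Real.pi : ℂ) * Complex.I * (c : ℂ) * (ξ : ℂ)) = 0}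

/-- `(1/q)𝕆 = {m/q : m odd}`. -/
def oddFracSet (q : ℝ) : Set ℝ := {x | ∃ m : ℤ, Odd m ∧ x = (m : ℝ) / q}

/-- `⋃_{n ≥ 1} 4^n (1/q)𝕆`. -/
def Zsc (q : ℝ) : Set ℝ :=
  {x | ∃ n : ℕ, 1 ≤ n ∧ ∃ m : ℤ, Odd m ∧ x = (4 : ℝ) ^ n * (m : ℝ) / q}

/-!
Put `u = e^{2πiaξ}`, `v = e^{2πibξ}`, `w = e^{2πicξ}`. Since these lie on the unit circle,
conjugating `1 + u + v + w = 0` and multiplying by `uvw` gives `uv + vw + wu + uvw = 0`, so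
`(1 + u)(1 + v)(1 + w) = 0`. If, say, `w = -1` then `u = -v`, so both `2cξ` and `2(a - b)ξ` are
odd integers; hence `c ≡ a - b (mod 2)`, i.e. `a + b + c` is even, and as `a, b, c` are not all
even exactly two of them are odd. Conversely, for such parities `ξ = 1/2` is a zero.
-/

lemma one_add_mul_one_add_mul_one_add_eq_zero {u v w : ℂ} (hu : ‖u‖ = 1) (hv : ‖v‖ = 1)
    (hw : ‖w‖ = 1) (h : 1 + u + v + w = 0) : (1 + u) * (1 + v) * (1 + w) = 0 := by
  have mul_conj_eq_one {z : ℂ} (hz : ‖z‖ = 1) : z * starRingEnd ℂ z = 1 := by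
    rw [Complex.mul_conj, Complex.normSq_eq_norm_sq, hz]; norm_num
  have hconj : 1 + starRingEnd ℂ u + starRingEnd ℂ v + starRingEnd ℂ w = 0 := by
    simpa only [map_add, map_one, map_zero] using congrArg (starRingEnd ℂ) h
  linear_combination h + u * v * w * hconj - v * w * mul_conj_eq_one hu
    - u * w * mul_conj_eq_one hv - u * v * mul_conj_eq_one hw

lemma mem_maskZeroSet_iff {a b c : ℤ} {ξ : ℝ} :
    ξ ∈ maskZeroSet a b c ↔ 1 + expChar a ξ + expChar b ξ + expChar c ξ = 0 := by
  simp only [maskZeroSet, expChar, Set.mem_ofPred_eq, Complex.ofReal_intCast]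

lemma norm_expChar (lam x : ℝ) : ‖expChar lam x‖ = 1 := by
  rw [expChar, Complex.norm_exp]
  simp

lemma expChar_sub (l₁ l₂ x : ℝ) : expChar (l₁ - l₂) x = expChar l₁ x / expChar l₂ x := by
  rw [expChar, expChar, expChar, ← Complex.exp_sub]
  push_cast
  ring_nf

lemma expChar_int_half (t : ℤ) : expChar t (1 / 2) = (-1) ^ t := by
  rw [expChar, ← Complex.exp_pi_mul_I, ← Complex.exp_int_mul]
  push_cast
  ring_nf

lemma exists_two_mul_eq_odd_of_expChar_eq_neg_one {lam x : ℝ} (h : expChar lam x = -1) :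
    ∃ n : ℤ, 2 * lam * x = 2 * n + 1 := by
  rw [expChar, ← Complex.exp_pi_mul_I, Complex.exp_eq_exp_iff_exists_int] at h
  obtain ⟨n, hn⟩ := h
  refine ⟨n, Complex.ofReal_injective ?_⟩
  have hπI : (Real.pi : ℂ) * Complex.I ≠ 0 := by simp [Real.pi_ne_zero]
  apply mul_right_cancel₀ hπI
  push_cast
  linear_combination hn

lemma even_sub_of_expChar_eq_neg_one {s t : ℤ} {x : ℝ} (hs : expChar s x = -1)
    (ht : expChar t x = -1) : Even (s - t) := by
  obtain ⟨m, hm⟩ := exists_two_mul_eq_odd_of_expChar_eq_neg_one hs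
  obtain ⟨n, hn⟩ := exists_two_mul_eq_odd_of_expChar_eq_neg_one ht
  have hcross : (2 * n + 1) * s = (2 * m + 1) * t := by
    exact_mod_cast (by linear_combination (t : ℝ) * hm - (s : ℝ) * hn :
      (2 * n + 1 : ℝ) * s = (2 * m + 1) * t)
  exact ⟨m * t - n * s, by linear_combination hcross⟩

lemma even_add_add_of_expChar_eq_neg_one {a b c : ℤ} {x : ℝ} (hc : expChar c x = -1)
    (hab : expChar a x + expChar b x = 0) : Even (a + b + c) := by
  have hab' : expChar ((a - b : ℤ) : ℝ) x = -1 := by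
    rw [Int.cast_sub, expChar_sub, eq_neg_of_add_eq_zero_left hab, neg_div, div_self]
    exact Complex.exp_ne_zero _
  have hc_ab := even_sub_of_expChar_eq_neg_one hc hab'
  rw [show a + b + c = c - (a - b) + 2 * a by ring]
  exact hc_ab.add (even_two_mul a)

lemma even_add_add_of_mem_maskZeroSet {a b c : ℤ} {ξ : ℝ} (h : ξ ∈ maskZeroSet a b c) :
    Even (a + b + c) := by
  rw [mem_maskZeroSet_iff] at h
  rcases mul_eq_zero.mp (one_add_mul_one_add_mul_one_add_eq_zero (norm_expChar _ _)
    (norm_expChar _ _) (norm_expChar _ _) h) with hab | hc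
  · rcases mul_eq_zero.mp hab with ha | hb
    · have := even_add_add_of_expChar_eq_neg_one (eq_neg_of_add_eq_zero_right ha)
        (by linear_combination h - ha : expChar b ξ + expChar c ξ = 0)
      rwa [add_comm, ← add_assoc] at this
    · have := even_add_add_of_expChar_eq_neg_one (eq_neg_of_add_eq_zero_right hb)
        (by linear_combination h - hb : expChar a ξ + expChar c ξ = 0)
      rwa [add_right_comm] at this
  · exact even_add_add_of_expChar_eq_neg_one (eq_neg_of_add_eq_zero_right hc)
      (by linear_combination h - hc)

lemma two_odd_one_even_of_even_add_add {a b c : ℤ} (hgcd : Int.gcd a (Int.gcd b c) = 1)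
    (h : Even (a + b + c)) :
    (Odd a ∧ Odd b ∧ Even c) ∨ (Odd a ∧ Even b ∧ Odd c) ∨ (Even a ∧ Odd b ∧ Odd c) := by
  have not_all_even : ¬(2 ∣ a ∧ 2 ∣ b ∧ 2 ∣ c) := by
    rintro ⟨ha, hb, hc⟩
    have h2 := Int.dvd_coe_gcd ha (Int.dvd_coe_gcd hb hc)
    rw [hgcd] at h2
    norm_num at h2
  simp only [Int.even_iff, Int.odd_iff] at h ⊢
  omega

lemma half_mem_maskZeroSet {a b c : ℤ}
    (h : (Odd a ∧ Odd b ∧ Even c) ∨ (Odd a ∧ Even b ∧ Odd c) ∨ (Even a ∧ Odd b ∧ Odd c)) :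
    (1 / 2 : ℝ) ∈ maskZeroSet a b c := by
  rw [mem_maskZeroSet_iff, expChar_int_half, expChar_int_half, expChar_int_half]
  rcases h with ⟨ha, hb, hc⟩ | ⟨ha, hb, hc⟩ | ⟨ha, hb, hc⟩ <;>
    rw [ha.neg_one_zpow, hb.neg_one_zpow, hc.neg_one_zpow] <;> norm_num

theorem stmt13_general (a b c : ℤ)
    (hgcd : Int.gcd a (Int.gcd b c) = 1) :
    (∃ ξ : ℝ, ξ ∈ maskZeroSet a b c) ↔
      ((Odd a ∧ Odd b ∧ Even c) ∨ (Odd a ∧ Even b ∧ Odd c) ∨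
        (Even a ∧ Odd b ∧ Odd c)) :=
  ⟨fun ⟨_, hξ⟩ => two_odd_one_even_of_even_add_add hgcd (even_add_add_of_mem_maskZeroSet hξ),
    fun h => ⟨1 / 2, half_mem_maskZeroSet h⟩⟩

theorem stmt13 (a b c : ℤ) (ha : 0 < a) (hb : 0 < b) (hc : 0 < c)
    (hab : a ≠ b) (hac : a ≠ c) (hbc : b ≠ c)
    (hgcd : Int.gcd a (Int.gcd b c) = 1) :
    (∃ ξ : ℝ, ξ ∈ maskZeroSet a b c) ↔
      ((Odd a ∧ Odd b ∧ Even c) ∨ (Odd a ∧ Even b ∧ Odd c) ∨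
        (Even a ∧ Odd b ∧ Odd c)) :=
  stmt13_general a b c hgcd

end
end

section
/- Let D = {0, a, b, c} with 0 < a < c odd, b even, gcd(a,b,c) = 1, and let μ = μ_{4,D}. If 0 ∈ Λ ⊂ ℝ is an orthogonal set for μ, then either Λ \ {0} ⊆ Z₀ ∪ Z₃, or Λ \ {0} ⊆ Z_j ∪ Z₃' for j = 1 or j = 2. In particular, if t is even, then either Λ \ {0} ⊆ Z₃, or Λ \ {0} ⊆ Z_j ∪ Z₃' for j = 1 or j = 2. -/
open MeasureTheory Finset Polynomial
open scoped Classical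

noncomputable section

/-!
By self-similarity `charFun μ θ = m(θ / 4) · charFun μ (θ / 4)` with the mask
`m(θ) = ¼ ∑_{d ∈ D} exp(i d θ)`; as `charFun μ` is continuous with value `1` at `0`, every zero
`ξ` of `ξ ↦ charFun μ (2πξ)` has `ξ / 4 ^ k ∈ maskZeroSet a b c` for some `k ≥ 1`. Four unit
vectors with sum zero cancel in pairs, so `maskZeroSet a b c ⊆ R₁ ∪ R₂ ∪ R₃`, and orthogonality
puts every difference of two points of `Λ` into `Z₁ ∪ Z₂ ∪ Z₃`.

Clearing denominators, a point of `Zᵢ` off its trivial part (`Z₀` for `i = 1, 2`, `Z₃'` for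
`i = 3`) is prime to `pᵢ` and divisible by the other two `pⱼ`. Two such points of `Λ` with
different indices would have a difference prime to two of the `pᵢ`, which no point of
`Z₁ ∪ Z₂ ∪ Z₃` is; so all of `Λ \ {0}` lies in one `Zᵢ` together with `Z₀ ∪ Z₃'`.
-/

open Complex ComplexConjugate Real Filter Topology

def digitMask (D : Finset ℤ) (θ : ℝ) : ℂ := (D.card : ℂ)⁻¹ * ∑ d ∈ D, cexp (d * θ * I)

theorem charFun_map_add_div (μ : Measure ℝ) (d b θ : ℝ) :
    charFun (μ.map fun x => (x + d) / b) θ = cexp (d * (θ / b) * I) * charFun μ (θ / b) := by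
  have : (fun x : ℝ => (x + d) / b) = (b⁻¹ * ·) ∘ (· + d) := by
    funext x; simp [div_eq_inv_mul]
  rw [this, ← Measure.map_map (by fun_prop) (by fun_prop), charFun_map_mul,
    charFun_map_add_const, mul_comm]
  simp [div_eq_inv_mul, mul_comm]

theorem IsSelfSimilarMeasure.charFun_eq {b : ℕ} {D : Finset ℤ} {μ : Measure ℝ}
    (hμ : IsSelfSimilarMeasure b D μ) (θ : ℝ) :
    charFun μ θ = digitMask D (θ / b) * charFun μ (θ / b) := by
  have := hμ.1
  conv_lhs => rw [hμ.2]
  rw [charFun_apply, integral_smul_measure, integral_finsetSum_measure fun d _ => ?_]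
  · simp_rw [← charFun_apply, charFun_map_add_div, ← Finset.sum_mul, digitMask]
    simp [mul_assoc]
  · exact (BoundedContinuousFunction.innerProbChar θ).integrable _

theorem IsSelfSimilarMeasure.charFun_eq_prod {b : ℕ} {D : Finset ℤ} {μ : Measure ℝ}
    (hμ : IsSelfSimilarMeasure b D μ) (θ : ℝ) (n : ℕ) :
    charFun μ θ = (∏ k ∈ range n, digitMask D (θ / b ^ (k + 1))) * charFun μ (θ / b ^ n) := by
  induction n with
  | zero => simp
  | succ n ih =>
    rw [ih, hμ.charFun_eq (θ / b ^ n), prod_range_succ, div_div, ← pow_succ, mul_assoc]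

theorem IsSelfSimilarMeasure.exists_digitMask_eq_zero {b : ℕ} {D : Finset ℤ} {μ : Measure ℝ}
    (hμ : IsSelfSimilarMeasure b D μ) (hb : 1 < b) {θ : ℝ} (h : charFun μ θ = 0) :
    ∃ k, 1 ≤ k ∧ digitMask D (θ / b ^ k) = 0 := by
  have := hμ.1
  have hlim : Tendsto (fun n : ℕ => charFun μ (θ / (b : ℝ) ^ n)) atTop (𝓝 1) := by
    have hθ : Tendsto (fun n : ℕ => θ / (b : ℝ) ^ n) atTop (𝓝 0) :=
      tendsto_const_nhds.div_atTop (tendsto_pow_atTop_atTop_of_one_lt (by exact_mod_cast hb))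
    have := ((continuous_charFun (μ := μ)).tendsto 0).comp hθ
    rwa [charFun_zero, probReal_univ, Complex.ofReal_one] at this
  obtain ⟨n, hn⟩ := (hlim.eventually_ne one_ne_zero).exists
  rw [hμ.charFun_eq_prod θ n, mul_eq_zero, prod_eq_zero_iff] at h
  obtain ⟨k, -, hk⟩ := h.resolve_right hn
  exact ⟨k + 1, k.succ_pos, hk⟩

theorem one_add_mul_one_add_mul_one_add_eq_zero_s16 {z₁ z₂ z₃ : ℂ} (h₁ : ‖z₁‖ = 1) (h₂ : ‖z₂‖ = 1)
    (h₃ : ‖z₃‖ = 1) (h : 1 + z₁ + z₂ + z₃ = 0) : (1 + z₁) * (1 + z₂) * (1 + z₃) = 0 := by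
  -- conjugating `h` with `conj z = z⁻¹` gives `z₁z₂ + z₁z₃ + z₂z₃ + z₁z₂z₃ = 0`
  have hconj : ∀ {z : ℂ}, ‖z‖ = 1 → z * conj z = 1 := fun hz => by
    rw [Complex.mul_conj, Complex.normSq_eq_norm_sq, hz]; norm_num
  have hc : 1 + conj z₁ + conj z₂ + conj z₃ = 0 := by simpa using congrArg conj h
  linear_combination h + z₁ * z₂ * z₃ * hc - z₂ * z₃ * hconj h₁ - z₁ * z₃ * hconj h₂
    - z₁ * z₂ * hconj h₃

theorem exists_odd_of_cexp_eq_neg_one {θ : ℝ} (h : cexp (2 * π * I * θ) = -1) :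
    ∃ u : ℤ, Odd u ∧ 2 * θ = u := by
  obtain ⟨n, hn⟩ := Complex.exp_eq_exp_iff_exists_int.1 (h.trans Complex.exp_pi_mul_I.symm)
  refine ⟨2 * n + 1, odd_two_mul_add_one n, ?_⟩
  have : ((2 * θ : ℝ) : ℂ) * (π * I) = ((2 * n + 1 : ℤ) : ℂ) * (π * I) := by
    push_cast; linear_combination hn
  exact_mod_cast mul_right_cancel₀ (by simp [Real.pi_ne_zero]) this

theorem mem_oddFracSet_two_mul_gcd {A B u v : ℤ} {η : ℝ} (hu : Odd u) (hA : 2 * A * η = u)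
    (hB : 2 * B * η = v) : η ∈ oddFracSet (2 * Int.gcd A B) := by
  have hA0 : A ≠ 0 := by
    rintro rfl
    obtain rfl : u = 0 := by exact_mod_cast (by simpa using hA.symm : (u : ℝ) = 0)
    exact Int.not_odd_zero hu
  have hg : (Int.gcd A B : ℝ) ≠ 0 := by exact_mod_cast (Int.gcd_pos_of_ne_zero_left B hA0).ne'
  obtain ⟨k, hk⟩ := Int.gcd_dvd_left A B
  -- Bezout: `2 gcd(A, B) η` is an integer combination of `2Aη` and `2Bη`
  obtain ⟨n, hn⟩ : ∃ n : ℤ, 2 * (Int.gcd A B : ℝ) * η = n := by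
    refine ⟨u * A.gcdA B + v * A.gcdB B, ?_⟩
    have := congrArg (fun z : ℤ => (z : ℝ)) (Int.gcd_eq_gcd_ab A B)
    push_cast at this ⊢
    linear_combination 2 * η * this + A.gcdA B * hA + A.gcdB B * hB
  have hnk : n * k = u := by
    have hk' : (A : ℝ) = Int.gcd A B * k := by exact_mod_cast hk
    exact_mod_cast (by push_cast; rw [← hn, ← hA, hk']; ring : ((n * k : ℤ) : ℝ) = u)
  refine ⟨n, Int.Odd.of_mul_left (hnk ▸ hu), ?_⟩
  field_simp
  linarith

theorem eq_of_two_pow_mul_eq_two_pow_mul {t s : ℕ} {m n : ℤ} (hm : Odd m) (hn : Odd n)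
    (h : 2 ^ t * m = 2 ^ s * n) : t = s := by
  wlog hts : t ≤ s generalizing t s m n
  · exact (this hn hm h.symm (by omega)).symm
  obtain ⟨r, rfl⟩ := Nat.exists_eq_add_of_le hts
  rw [pow_add, mul_assoc, mul_right_inj' (by positivity)] at h
  rcases r with _ | r
  · rfl
  · exact absurd (h ▸ hm) (Int.not_odd_iff_even.2 ⟨2 ^ r * n, by ring⟩)

theorem mem_oddFracSet_two_pow_mul_gcd {t t' : ℕ} {l l' u v : ℤ} {η : ℝ} (hl : Odd l)
    (hl' : Odd l') (hu : Odd u) (hv : Odd v) (h : 2 * (2 ^ t * l) * η = u)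
    (h' : 2 * (2 ^ t' * l') * η = v) : η ∈ oddFracSet (2 ^ (t + 1) * Int.gcd l l') := by
  obtain rfl : t = t' := by
    refine eq_of_two_pow_mul_eq_two_pow_mul (hl.mul hv) (hl'.mul hu) ?_
    exact_mod_cast (by push_cast; rw [← h, ← h']; ring :
      ((2 ^ t * (l * v) : ℤ) : ℝ) = ((2 ^ t' * (l' * u) : ℤ) : ℝ))
  obtain ⟨m, hm, hη⟩ := mem_oddFracSet_two_mul_gcd (A := l) (B := l') (η := 2 ^ t * η) hu
    (by rw [← h]; ring) (by rw [← h']; ring)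
  refine ⟨m, hm, ?_⟩
  field_simp at hη ⊢
  linear_combination hη

theorem maskZeroSet_subset {a b c : ℤ} {t t' : ℕ} {l l' : ℤ} (hl : Odd l) (hl' : Odd l')
    (hbe : b = 2 ^ t * l) (hcae : c - a = 2 ^ t' * l') :
    maskZeroSet a b c ⊆ oddFracSet (2 * Int.gcd a (c - b)) ∪ oddFracSet (2 * Int.gcd c (b - a))
      ∪ oddFracSet (2 ^ (t + 1) * Int.gcd l l') := by
  intro η hη
  set e : ℤ → ℂ := fun x => cexp (2 * π * I * x * η)
  have hnorm : ∀ x, ‖e x‖ = 1 := fun x => by simp [e, Complex.norm_exp]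
  have hodd : ∀ x, e x = -1 → ∃ u : ℤ, Odd u ∧ 2 * x * η = u := fun x hx => by
    obtain ⟨u, hu, h⟩ :=
      exists_odd_of_cexp_eq_neg_one (θ := x * η) (by simpa [e, mul_assoc] using hx)
    exact ⟨u, hu, by rw [← h]; ring⟩
  have hsub : ∀ x y, e x + e y = 0 → e (y - x) = -1 := fun x y hxy => by
    have : e (y - x) * e x = e y := by simp only [e, ← Complex.exp_add]; push_cast; ring_nf
    exact mul_right_cancel₀ (b := e x) (exp_ne_zero _) (by linear_combination this + hxy)
  have hη' : 1 + e a + e b + e c = 0 := hη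
  rcases mul_eq_zero.1 (one_add_mul_one_add_mul_one_add_eq_zero_s16 (hnorm a) (hnorm b) (hnorm c) hη')
    with hab | hc
  rcases mul_eq_zero.1 hab with ha | hb
  · obtain ⟨u, hu, hau⟩ := hodd a (by linear_combination ha)
    obtain ⟨v, -, hv⟩ := hodd (c - b) (hsub b c (by linear_combination hη' - ha))
    exact .inl (.inl (mem_oddFracSet_two_mul_gcd hu hau hv))
  · obtain ⟨u, hu, hbu⟩ := hodd b (by linear_combination hb)
    obtain ⟨v, hv, hcav⟩ := hodd (c - a) (hsub a c (by linear_combination hη' - hb))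
    rw [hbe] at hbu
    rw [hcae] at hcav
    push_cast at hbu hcav
    exact .inr (mem_oddFracSet_two_pow_mul_gcd hl hl' hu hv hbu hcav)
  · obtain ⟨u, hu, hcu⟩ := hodd c (by linear_combination hc)
    obtain ⟨v, -, hv⟩ := hodd (b - a) (hsub a b (by linear_combination hη' - hc))
    exact .inl (.inr (mem_oddFracSet_two_mul_gcd hu hcu hv))
theorem mem_Zsc_of_div_pow_mem_oddFracSet {q x : ℝ} {k : ℕ} (hk : 1 ≤ k)
    (h : x / 4 ^ k ∈ oddFracSet q) : x ∈ Zsc q := by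
  obtain ⟨m, hm, h⟩ := h
  exact ⟨k, hk, m, hm, by rw [mul_div_assoc, ← h]; field_simp⟩

theorem Zsc_subset_Zsc_mul_odd {q : ℝ} {p : ℕ} (hp : Odd p) : Zsc q ⊆ Zsc (q * p) := by
  rintro x ⟨k, hk, m, hm, rfl⟩
  have : (p : ℝ) ≠ 0 := by exact_mod_cast hp.pos.ne'
  exact ⟨k, hk, m * p, hm.mul (by exact_mod_cast hp), by push_cast; field_simp⟩

theorem Zsc_subset_Zsc_four_pow_mul (q : ℝ) (s : ℕ) : Zsc q ⊆ Zsc (4 ^ s * q) := by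
  rintro x ⟨k, hk, m, hm, rfl⟩
  exact ⟨k + s, by omega, m, hm, by rw [pow_add]; field_simp⟩

section EssentialIndex

variable {ι : Type*} [Fintype ι] [DecidableEq ι] {e p : ι → ℕ} {x : ℝ} {N : ℤ} {s : ι}
  {Λ : Set ℝ}

-- Multiplying by `Q = ∏ i, 2 ^ e i * p i` sends `Zsc (2 ^ e s * p s)` into the integers
-- divisible by every `p j` with `j ≠ s`; the image is prime to `p s` off `Zsc (2 ^ e s)`.
theorem exists_mul_prod_eq_of_mem_Zsc (hps : p s ≠ 0) (hx : x ∈ Zsc (2 ^ e s * p s)) :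
    ∃ (k : ℕ) (m : ℤ), x * ∏ i, (2 : ℝ) ^ e i * p i
        = ((4 ^ k * m * ∏ i ∈ univ.erase s, (2 : ℤ) ^ e i * p i : ℤ) : ℝ) ∧
      ((p s : ℤ) ∣ m → x ∈ Zsc (2 ^ e s)) := by
  obtain ⟨k, hk, m, hm, rfl⟩ := hx
  have : (p s : ℝ) ≠ 0 := by exact_mod_cast hps
  refine ⟨k, m, ?_, ?_⟩
  · rw [← Finset.mul_prod_erase univ _ (mem_univ s)]
    push_cast
    field_simp
  · rintro ⟨m', rfl⟩
    exact ⟨k, hk, m', Int.Odd.of_mul_right hm, by push_cast; field_simp⟩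

theorem exists_int_mul_prod_eq_of_mem_Zsc (hps : p s ≠ 0) (hx : x ∈ Zsc (2 ^ e s * p s)) :
    ∃ N : ℤ, x * ∏ i, (2 : ℝ) ^ e i * p i = N := by
  obtain ⟨k, m, hxk, -⟩ := exists_mul_prod_eq_of_mem_Zsc hps hx
  exact ⟨_, hxk⟩

theorem dvd_of_mem_Zsc_of_mul_prod_eq (hps : p s ≠ 0) (hx : x ∈ Zsc (2 ^ e s * p s))
    (hN : x * ∏ i, (2 : ℝ) ^ e i * p i = N) {j : ι} (hj : j ≠ s) : (p j : ℤ) ∣ N := by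
  obtain ⟨k, m, hxk, -⟩ := exists_mul_prod_eq_of_mem_Zsc hps hx
  obtain rfl : N = 4 ^ k * m * ∏ i ∈ univ.erase s, (2 : ℤ) ^ e i * p i := by
    exact_mod_cast hN.symm.trans hxk
  exact ((dvd_mul_left _ _).trans (dvd_prod_of_mem _ (mem_erase.2 ⟨hj, mem_univ j⟩))).mul_left _

theorem eq_of_mem_Zsc_of_not_dvd (hps : p s ≠ 0) (hx : x ∈ Zsc (2 ^ e s * p s))
    (hN : x * ∏ i, (2 : ℝ) ^ e i * p i = N) {j : ι} (hj : ¬ (p j : ℤ) ∣ N) : s = j := by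
  by_contra hsj
  exact hj (dvd_of_mem_Zsc_of_mul_prod_eq hps hx hN (Ne.symm hsj))

theorem not_dvd_of_mem_Zsc_of_mul_prod_eq (hp : ∀ i, Odd (p i))
    (hcop : Pairwise fun i j => Nat.Coprime (p i) (p j))
    (hx : x ∈ Zsc (2 ^ e s * p s)) (hxT : x ∉ Zsc (2 ^ e s))
    (hN : x * ∏ i, (2 : ℝ) ^ e i * p i = N) : ¬ (p s : ℤ) ∣ N := by
  obtain ⟨k, m, hxk, hT⟩ := exists_mul_prod_eq_of_mem_Zsc (hp s).pos.ne' hx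
  obtain rfl : N = 4 ^ k * m * ∏ i ∈ univ.erase s, (2 : ℤ) ^ e i * p i := by
    exact_mod_cast hN.symm.trans hxk
  have h2 : IsCoprime (p s : ℤ) 2 := by
    exact_mod_cast Nat.isCoprime_iff_coprime.2 (hp s).coprime_two_right
  have hcof : IsCoprime (p s : ℤ) (4 ^ k * ∏ i ∈ univ.erase s, (2 : ℤ) ^ e i * p i) := by
    refine IsCoprime.mul_right
      (by rw [show (4 : ℤ) = 2 ^ 2 by norm_num, ← pow_mul]; exact h2.pow_right)
      (IsCoprime.prod_right fun i hi => (h2.pow_right).mul_right ?_)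
    exact Nat.isCoprime_iff_coprime.2 (hcop (Ne.symm (ne_of_mem_erase hi)))
  intro hdvd
  exact hxT (hT (hcof.dvd_of_dvd_mul_left (by rwa [mul_right_comm] at hdvd)))

-- For `x ≠ y`, `(x - y) Q` is prime to both `p i` and `p j`, which no point of any
-- `Zsc (2 ^ e s * p s)` is.
theorem eq_of_notMem_Zsc_two_pow (hp : ∀ i, Odd (p i))
    (hcop : Pairwise fun i j => Nat.Coprime (p i) (p j))
    (hdiff : ∀ x ∈ Λ, ∀ y ∈ Λ, x ≠ y → ∃ s, x - y ∈ Zsc (2 ^ e s * p s))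
    {x y : ℝ} (hx : x ∈ Λ) (hy : y ∈ Λ) {i j : ι}
    (hxi : x ∈ Zsc (2 ^ e i * p i)) (hxT : x ∉ Zsc (2 ^ e i))
    (hyj : y ∈ Zsc (2 ^ e j * p j)) (hyT : y ∉ Zsc (2 ^ e j)) : i = j := by
  have hp0 : ∀ i, p i ≠ 0 := fun i => (hp i).pos.ne'
  obtain ⟨Nx, hxN⟩ := exists_int_mul_prod_eq_of_mem_Zsc (hp0 i) hxi
  obtain ⟨Ny, hyN⟩ := exists_int_mul_prod_eq_of_mem_Zsc (hp0 j) hyj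
  have hx' := not_dvd_of_mem_Zsc_of_mul_prod_eq hp hcop hxi hxT hxN
  have hy' := not_dvd_of_mem_Zsc_of_mul_prod_eq hp hcop hyj hyT hyN
  by_cases hxy : x = y
  · subst hxy
    exact (eq_of_mem_Zsc_of_not_dvd (hp0 j) hyj hxN hx').symm
  by_contra hij
  obtain ⟨s, hs⟩ := hdiff x hx y hy hxy
  have hN : (x - y) * ∏ i, (2 : ℝ) ^ e i * p i = ((Nx - Ny : ℤ) : ℝ) := by
    rw [sub_mul, hxN, hyN]; push_cast; ring
  have hsi := eq_of_mem_Zsc_of_not_dvd (hp0 s) hs hN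
    (by rwa [dvd_sub_left (dvd_of_mem_Zsc_of_mul_prod_eq (hp0 j) hyj hyN hij)])
  have hsj := eq_of_mem_Zsc_of_not_dvd (hp0 s) hs hN
    (by rwa [dvd_sub_right (dvd_of_mem_Zsc_of_mul_prod_eq (hp0 i) hxi hxN (Ne.symm hij))])
  exact hij (hsi.symm.trans hsj)

theorem exists_forall_mem_Zsc_or_mem_Zsc_two_pow [Nonempty ι] (hp : ∀ i, Odd (p i))
    (hcop : Pairwise fun i j => Nat.Coprime (p i) (p j)) (h0 : 0 ∈ Λ)
    (hdiff : ∀ x ∈ Λ, ∀ y ∈ Λ, x ≠ y → ∃ s, x - y ∈ Zsc (2 ^ e s * p s)) :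
    ∃ i, ∀ x ∈ Λ, x ≠ 0 → x ∈ Zsc (2 ^ e i * p i) ∨ ∃ s, x ∈ Zsc (2 ^ e s) := by
  have hmem : ∀ x ∈ Λ, x ≠ 0 → ∃ s, x ∈ Zsc (2 ^ e s * p s) := fun x hx hx0 => by
    simpa using hdiff x hx 0 h0 hx0
  by_cases h : ∃ x ∈ Λ, ∃ i, x ∈ Zsc (2 ^ e i * p i) ∧ x ∉ Zsc (2 ^ e i)
  · obtain ⟨x, hx, i, hxi, hxT⟩ := h
    refine ⟨i, fun y hy hy0 => ?_⟩
    obtain ⟨s, hys⟩ := hmem y hy hy0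
    by_cases hyT : y ∈ Zsc (2 ^ e s)
    · exact .inr ⟨s, hyT⟩
    · exact .inl (eq_of_notMem_Zsc_two_pow hp hcop hdiff hx hy hxi hxT hys hyT ▸ hys)
  · push Not at h
    refine ⟨Classical.arbitrary ι, fun y hy hy0 => .inr ?_⟩
    obtain ⟨s, hys⟩ := hmem y hy hy0
    exact ⟨s, h y hy s hys⟩

end EssentialIndex

theorem subset_Zsc_union_of_sub_mem {p₁ p₂ p₃ t : ℕ} (h₁ : Odd p₁) (h₂ : Odd p₂) (h₃ : Odd p₃)
    (h₁₂ : Nat.Coprime p₁ p₂) (h₁₃ : Nat.Coprime p₁ p₃) (h₂₃ : Nat.Coprime p₂ p₃)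
    {Λ : Set ℝ} (h0 : 0 ∈ Λ)
    (hdiff : ∀ x ∈ Λ, ∀ y ∈ Λ, x ≠ y →
      x - y ∈ Zsc (2 * p₁) ∪ Zsc (2 * p₂) ∪ Zsc (2 ^ (t + 1) * p₃)) :
    Λ \ {0} ⊆ Zsc 2 ∪ Zsc (2 ^ (t + 1) * p₃) ∨ Λ \ {0} ⊆ Zsc (2 * p₁) ∪ Zsc (2 ^ (t + 1)) ∨
      Λ \ {0} ⊆ Zsc (2 * p₂) ∪ Zsc (2 ^ (t + 1)) := by
  obtain ⟨i, hi⟩ := exists_forall_mem_Zsc_or_mem_Zsc_two_pow (e := ![1, 1, t + 1])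
    (p := ![p₁, p₂, p₃]) (by simp [Fin.forall_fin_succ, *])
    (by
      intro i j hij
      fin_cases i <;> fin_cases j <;> simp at hij ⊢ <;>
        first | assumption | exact h₁₂.symm | exact h₁₃.symm | exact h₂₃.symm)
    h0 (fun x hx y hy hxy => by simpa [Fin.exists_fin_succ, or_assoc] using hdiff x hx y hy hxy)
  have hT₁ : Zsc 2 ⊆ Zsc (2 * p₁) := Zsc_subset_Zsc_mul_odd h₁
  have hT₂ : Zsc 2 ⊆ Zsc (2 * p₂) := Zsc_subset_Zsc_mul_odd h₂
  have hT₃ : Zsc (2 ^ (t + 1)) ⊆ Zsc (2 ^ (t + 1) * p₃) := Zsc_subset_Zsc_mul_odd h₃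
  have key : ∀ x ∈ Λ \ {0}, x ∈ Zsc (2 ^ ![1, 1, t + 1] i * (![p₁, p₂, p₃] i : ℕ)) ∨
      x ∈ Zsc 2 ∨ x ∈ Zsc (2 ^ (t + 1)) := by
    rintro x ⟨hx, hx0⟩
    rcases hi x hx hx0 with h | ⟨s, hs⟩
    · exact .inl h
    · fin_cases s <;> simp at hs <;> simp [hs]
  fin_cases i <;>
    simp only [Fin.zero_eta, Fin.mk_one, Fin.reduceFinMk, Matrix.cons_val, pow_one] at key
  · exact .inr <| .inl fun x hx =>
      (key x hx).elim .inl fun h => h.elim (fun h => .inl (hT₁ h)) .inr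
  · exact .inr <| .inr fun x hx =>
      (key x hx).elim .inl fun h => h.elim (fun h => .inl (hT₂ h)) .inr
  · exact .inl fun x hx => (key x hx).elim .inr fun h => h.elim .inl fun h => .inr (hT₃ h)

theorem odd_gcd_of_odd_left {x : ℤ} (y : ℤ) (hx : Odd x) : Odd (Int.gcd x y) :=
  (Int.natAbs_odd.2 hx).of_dvd_nat (Int.gcd_dvd_natAbs_left x y)

theorem coprime_of_forall_dvd {a b c : ℤ} (hgcd : Int.gcd a (Int.gcd b c) = 1) {m n : ℕ}
    (h : ∀ d : ℤ, d ∣ m → d ∣ n → d ∣ a ∧ d ∣ b ∧ d ∣ c) : Nat.Coprime m n := by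
  obtain ⟨ha, hb, hc⟩ := h (Nat.gcd m n) (Int.natCast_dvd_natCast.2 (Nat.gcd_dvd_left m n))
    (Int.natCast_dvd_natCast.2 (Nat.gcd_dvd_right m n))
  have := Int.dvd_coe_gcd_iff.2 ⟨ha, Int.dvd_coe_gcd_iff.2 ⟨hb, hc⟩⟩
  rw [hgcd] at this
  exact Nat.dvd_one.1 (by exact_mod_cast this)

theorem pairwise_coprime_gcds {a b c l l' : ℤ} {t : ℕ} (hgcd : Int.gcd a (Int.gcd b c) = 1)
    (hbe : b = 2 ^ t * l) :
    Nat.Coprime (Int.gcd a (c - b)) (Int.gcd c (b - a)) ∧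
      Nat.Coprime (Int.gcd a (c - b)) (Int.gcd l l') ∧
      Nat.Coprime (Int.gcd c (b - a)) (Int.gcd l l') := by
  have hb : ∀ {d : ℤ}, d ∣ l → d ∣ b := fun h => hbe ▸ h.mul_left _
  refine ⟨coprime_of_forall_dvd hgcd fun d h₁ h₂ => ?_,
    coprime_of_forall_dvd hgcd fun d h₁ h₂ => ?_,
    coprime_of_forall_dvd hgcd fun d h₁ h₂ => ?_⟩ <;> rw [Int.dvd_coe_gcd_iff] at h₁ h₂
  · exact ⟨h₁.1, by simpa using dvd_sub h₂.1 h₁.2, h₂.1⟩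
  · exact ⟨h₁.1, hb h₂.1, by simpa using dvd_add h₁.2 (hb h₂.1)⟩
  · exact ⟨by simpa using dvd_sub (hb h₂.1) h₁.2, hb h₂.1, h₁.1⟩

theorem integral_expChar_mul_conj (μ : Measure ℝ) (l₁ l₂ : ℝ) :
    ∫ x, expChar l₁ x * conj (expChar l₂ x) ∂μ = charFun μ (2 * π * (l₁ - l₂)) := by
  rw [charFun_apply_real]
  congr with x
  rw [expChar, expChar, ← Complex.exp_conj, ← Complex.exp_add]
  congr 1
  simp only [map_mul, map_ofNat, Complex.conj_ofReal, Complex.conj_I]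
  push_cast
  ring

theorem IsOrthogonalSetFor.sub_mem_of_charFun_eq_zero {Λ S : Set ℝ} {μ : Measure ℝ}
    (hΛ : IsOrthogonalSetFor Λ μ)
    (hS : ∀ ξ, charFun μ (2 * π * ξ) = 0 → ξ ∈ S) : ∀ x ∈ Λ, ∀ y ∈ Λ, x ≠ y → x - y ∈ S :=
  fun x hx y hy hxy => hS _ ((integral_expChar_mul_conj μ x y).symm.trans (hΛ x hx y hy hxy))

theorem mem_Zsc_of_charFun_eq_zero {a b c : ℤ} {t t' : ℕ} {l l' : ℤ} (hac : a < c)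
    (haodd : Odd a) (hcodd : Odd c) (hbeven : Even b) (hb : 0 < b) (hl : Odd l) (hl' : Odd l')
    (hbe : b = 2 ^ t * l) (hcae : c - a = 2 ^ t' * l') {μ : Measure ℝ}
    (hμ : IsSelfSimilarMeasure 4 ({0, a, b, c} : Finset ℤ) μ) {ξ : ℝ}
    (h : charFun μ (2 * π * ξ) = 0) :
    ξ ∈ Zsc (2 * Int.gcd a (c - b)) ∪ Zsc (2 * Int.gcd c (b - a)) ∪
      Zsc (2 ^ (t + 1) * Int.gcd l l') := by
  obtain ⟨k, hk, hmask⟩ := hμ.exists_digitMask_eq_zero (by norm_num) h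
  have hη : ξ / 4 ^ k ∈ maskZeroSet a b c := by
    have := Int.odd_iff.1 haodd
    have := Int.odd_iff.1 hcodd
    have := Int.even_iff.1 hbeven
    rw [digitMask, mul_eq_zero, sum_insert (by simp; omega), sum_insert (by simp; omega),
      sum_insert (by simp; omega), sum_singleton] at hmask
    simp only [maskZeroSet, Set.mem_ofPred_eq]
    convert hmask.resolve_left (by simp) using 1
    push_cast
    ring_nf
    rw [Complex.exp_zero]
    ring
  rcases maskZeroSet_subset hl hl' hbe hcae hη with (h | h) | h
  · exact .inl (.inl (mem_Zsc_of_div_pow_mem_oddFracSet hk h))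
  · exact .inl (.inr (mem_Zsc_of_div_pow_mem_oddFracSet hk h))
  · exact .inr (mem_Zsc_of_div_pow_mem_oddFracSet hk h)

theorem stmt16_general (a b c : ℤ) (t t' : ℕ) (l l' : ℤ)
    (hac : a < c) (haodd : Odd a) (hcodd : Odd c)
    (hbeven : Even b) (hb : 0 < b)
    (hgcd : Int.gcd a (Int.gcd b c) = 1)
    (hl : Odd l) (hl' : Odd l')
    (hbe : b = 2 ^ t * l) (hcae : c - a = 2 ^ t' * l')
    (μ : Measure ℝ) (hμ : IsSelfSimilarMeasure 4 ({0, a, b, c} : Finset ℤ) μ)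
    (Λ : Set ℝ) (h0Λ : (0 : ℝ) ∈ Λ) (horth : IsOrthogonalSetFor Λ μ) :
    (Λ \ {0} ⊆ Zsc 2 ∪ Zsc (2 ^ (t + 1) * (Int.gcd l l' : ℝ)) ∨
     Λ \ {0} ⊆ Zsc (2 * (Int.gcd a (c - b) : ℝ)) ∪ Zsc (2 ^ (t + 1)) ∨
     Λ \ {0} ⊆ Zsc (2 * (Int.gcd c (b - a) : ℝ)) ∪ Zsc (2 ^ (t + 1))) ∧
    (Even t →
      (Λ \ {0} ⊆ Zsc (2 ^ (t + 1) * (Int.gcd l l' : ℝ)) ∨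
       Λ \ {0} ⊆ Zsc (2 * (Int.gcd a (c - b) : ℝ)) ∪ Zsc (2 ^ (t + 1)) ∨
       Λ \ {0} ⊆ Zsc (2 * (Int.gcd c (b - a) : ℝ)) ∪ Zsc (2 ^ (t + 1)))) := by
  obtain ⟨h₁₂, h₁₃, h₂₃⟩ := pairwise_coprime_gcds (l' := l') hgcd hbe
  have hp₃ := odd_gcd_of_odd_left l' hl
  have hΛ := subset_Zsc_union_of_sub_mem (odd_gcd_of_odd_left _ haodd)
    (odd_gcd_of_odd_left _ hcodd) hp₃ h₁₂ h₁₃ h₂₃ h0Λ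
    (horth.sub_mem_of_charFun_eq_zero fun _ =>
      mem_Zsc_of_charFun_eq_zero hac haodd hcodd hbeven hb hl hl' hbe hcae hμ)
  refine ⟨hΛ, fun hteven => hΛ.imp_left fun h => h.trans (Set.union_subset ?_ le_rfl)⟩
  obtain ⟨s, rfl⟩ := hteven
  have h4 : (4 : ℝ) ^ s * 2 = 2 ^ (s + s + 1) := by
    rw [pow_succ, pow_add, ← mul_pow]; norm_num
  exact (Zsc_subset_Zsc_four_pow_mul 2 s).trans (h4 ▸ Zsc_subset_Zsc_mul_odd hp₃)

theorem stmt16 (a b c : ℤ) (t t' : ℕ) (l l' : ℤ)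
    (ha : 0 < a) (hac : a < c) (haodd : Odd a) (hcodd : Odd c)
    (hbeven : Even b) (hb : 0 < b)
    (hgcd : Int.gcd a (Int.gcd b c) = 1)
    (ht : 1 ≤ t) (ht' : 1 ≤ t') (hl : Odd l) (hl' : Odd l')
    (hbe : b = 2 ^ t * l) (hcae : c - a = 2 ^ t' * l')
    (μ : Measure ℝ) (hμ : IsSelfSimilarMeasure 4 ({0, a, b, c} : Finset ℤ) μ)
    (Λ : Set ℝ) (h0Λ : (0 : ℝ) ∈ Λ) (horth : IsOrthogonalSetFor Λ μ) :
    (Λ \ {0} ⊆ Zsc 2 ∪ Zsc (2 ^ (t + 1) * (Int.gcd l l' : ℝ)) ∨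
     Λ \ {0} ⊆ Zsc (2 * (Int.gcd a (c - b) : ℝ)) ∪ Zsc (2 ^ (t + 1)) ∨
     Λ \ {0} ⊆ Zsc (2 * (Int.gcd c (b - a) : ℝ)) ∪ Zsc (2 ^ (t + 1))) ∧
    (Even t →
      (Λ \ {0} ⊆ Zsc (2 ^ (t + 1) * (Int.gcd l l' : ℝ)) ∨
       Λ \ {0} ⊆ Zsc (2 * (Int.gcd a (c - b) : ℝ)) ∪ Zsc (2 ^ (t + 1)) ∨
       Λ \ {0} ⊆ Zsc (2 * (Int.gcd c (b - a) : ℝ)) ∪ Zsc (2 ^ (t + 1)))) :=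
  stmt16_general a b c t t' l l' hac haodd hcodd hbeven hb hgcd hl hl' hbe hcae μ hμ Λ h0Λ horth

end
end
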